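/- For every iteration n ∈ ℕ and every ensemble index j ∈ {1,...,J}, the parameter component u^{(j)}_n of the iterative ensemble Kalman method lies in the subspace 𝒜 = span{ψ^{(1)},...,ψ^{(J)}} spanned by the initial ensemble; consequently the estimate u_n = (1/J) Σ_j u^{(j)}_n also lies in 𝒜. -/

import Mathlib

open scoped RealInnerProductSpace

/-!
Each analysis step moves a member by `Cup w`, and `Cup w` is a linear combination of the
current ensemble members, whatever the (nonlinear) forward map and the gain are. Hence the
span of the ensemble can only shrink from one iteration to the next, so it always stays inside
the span of the initial ensemble.
-/

theorem Submodule.mem_span_range_zero_of_mem_span_range_pred {R M ι : Type*} [Semiring R]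
    [AddCommMonoid M] [Module R M] (u : ℕ → ι → M)
    (hstep : ∀ n j, u (n + 1) j ∈ span R (Set.range (u n))) :
    ∀ n j, u n j ∈ span R (Set.range (u 0)) := by
  intro n
  induction n with
  | zero => exact fun j => subset_span ⟨j, rfl⟩
  | succ n ih =>
    have hle : span R (Set.range (u n)) ≤ span R (Set.range (u 0)) :=
      span_le.mpr (Set.range_subset_iff.mpr ih)
    exact fun j => hle (hstep n j)

theorem stmt_1_general
    {X Y : Type*} [NormedAddCommGroup X] [InnerProductSpace ℝ X]
    [NormedAddCommGroup Y] [InnerProductSpace ℝ Y]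
    (G : X → Y) (J : ℕ)
    (ψ : Fin J → X) (u : ℕ → Fin J → X) (h0 : ∀ j, u 0 j = ψ j)
    -- centered responses
    (ptil : ℕ → Fin J → Y)
    -- empirical covariances (as sums of rank-one operators)
    (Cup : ℕ → Y →ₗ[ℝ] X)
    (hCup : ∀ n (w : Y), Cup (n + 1) w = (J : ℝ)⁻¹ • ∑ j, ⟪ptil (n + 1) j, w⟫ • u n j)
    -- K n is the inverse (Cpp n + Γ)⁻¹
    (K : ℕ → Y →ₗ[ℝ] Y)
    -- perturbed data and the analysis update
    (ydat : ℕ → Fin J → Y)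
    (hupd : ∀ n j, u (n + 1) j = u n j + Cup (n + 1) (K (n + 1) (ydat (n + 1) j - G (u n j)))) :
    (∀ n j, u n j ∈ Submodule.span ℝ (Set.range ψ)) ∧
      (∀ n, (J : ℝ)⁻¹ • ∑ j, u n j ∈ Submodule.span ℝ (Set.range ψ)) := by
  have hCup_mem : ∀ n w, Cup (n + 1) w ∈ Submodule.span ℝ (Set.range (u n)) := fun n w => by
    rw [hCup]
    exact Submodule.smul_mem _ _ <| Submodule.sum_mem _ fun j _ =>
      Submodule.smul_mem _ _ (Submodule.subset_span ⟨j, rfl⟩)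
  have hstep : ∀ n j, u (n + 1) j ∈ Submodule.span ℝ (Set.range (u n)) := fun n j => by
    rw [hupd]
    exact Submodule.add_mem _ (Submodule.subset_span ⟨j, rfl⟩) (hCup_mem n _)
  have hmem : ∀ n j, u n j ∈ Submodule.span ℝ (Set.range ψ) := by
    simpa only [show u 0 = ψ from funext h0] using
      Submodule.mem_span_range_zero_of_mem_span_range_pred u hstep
  exact ⟨hmem, fun n => Submodule.smul_mem _ _ (Submodule.sum_mem _ fun j _ => hmem n j)⟩

/-- every ensemble member `u n j` produced by the iterative ensemble Kalman
method remains in the subspace `𝒜 = span{ψ^(1),...,ψ^(J)}` spanned by the initial ensemble,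
and hence so does the estimate `u_n = (1/J) Σ_j u n j`. -/
theorem stmt_1
    {X Y : Type*} [NormedAddCommGroup X] [InnerProductSpace ℝ X] [FiniteDimensional ℝ X]
    [NormedAddCommGroup Y] [InnerProductSpace ℝ Y] [FiniteDimensional ℝ Y]
    (G : X → Y) (J : ℕ) (hJ : 0 < J)
    (ψ : Fin J → X) (u : ℕ → Fin J → X) (h0 : ∀ j, u 0 j = ψ j)
    -- predicted responses
    (phat : ℕ → Fin J → Y) (hphat : ∀ n j, phat (n + 1) j = G (u n j))
    -- centered responses
    (ptil : ℕ → Fin J → Y)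
    (hptil : ∀ n j, ptil (n + 1) j = phat (n + 1) j - (J : ℝ)⁻¹ • ∑ l, phat (n + 1) l)
    -- empirical covariances (as sums of rank-one operators)
    (Cup : ℕ → Y →ₗ[ℝ] X)
    (hCup : ∀ n (w : Y), Cup (n + 1) w = (J : ℝ)⁻¹ • ∑ j, ⟪ptil (n + 1) j, w⟫ • u n j)
    (Cpp : ℕ → Y →ₗ[ℝ] Y)
    (hCpp : ∀ n (w : Y), Cpp (n + 1) w = (J : ℝ)⁻¹ • ∑ j, ⟪ptil (n + 1) j, w⟫ • phat (n + 1) j)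
    -- positive-definite symmetric noise covariance
    (Γ : Y →ₗ[ℝ] Y) (hΓsym : Γ.IsSymmetric) (hΓpd : ∀ w : Y, w ≠ 0 → 0 < ⟪Γ w, w⟫)
    -- K n is the inverse (Cpp n + Γ)⁻¹
    (K : ℕ → Y →ₗ[ℝ] Y)
    (hK : ∀ n, (Cpp (n + 1) + Γ) ∘ₗ K (n + 1) = LinearMap.id)
    (hK' : ∀ n, K (n + 1) ∘ₗ (Cpp (n + 1) + Γ) = LinearMap.id)
    -- perturbed data and the analysis update
    (ydat : ℕ → Fin J → Y)
    (hupd : ∀ n j, u (n + 1) j = u n j + Cup (n + 1) (K (n + 1) (ydat (n + 1) j - G (u n j)))) :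
    (∀ n j, u n j ∈ Submodule.span ℝ (Set.range ψ)) ∧
      (∀ n, (J : ℝ)⁻¹ • ∑ j, u n j ∈ Submodule.span ℝ (Set.range ψ)) :=
  stmt_1_general G J ψ u h0 ptil Cup hCup K ydat hupd
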